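/- arXiv:1209.6447 — 2 statements merged into one kernel-verified Lean document; each statement's English description precedes it below -/
import Mathlib

section
/- Let G be a finite group, H ≤ G a subgroup, and χ an irreducible complex character of H. Suppose H' ⊆ H satisfies H' ∩ Ker(χ) = ∅ and χ^G(g) = 0 for some g ∈ G. Then there exists an irreducible constituent φ' of χ^G such that ({g} ∪ H') ∩ Ker(φ') = ∅. -/
open scoped BigOperators
open Classical

noncomputable section

/-- `χ : G → ℂ` is a character of `G` (trace of a f.d. complex representation). -/
def IsChar (G : Type) [Group G] (χ : G → ℂ) : Prop :=
  ∃ V : FDRep ℂ G, ∀ g, V.character g = χ g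

/-- `χ : G → ℂ` is an irreducible character. -/
def IsIrrChar (G : Type) [Group G] (χ : G → ℂ) : Prop :=
  ∃ V : FDRep ℂ G, CategoryTheory.Simple V ∧ ∀ g, V.character g = χ g

/-- The induced character `χ^G(g) = (1/|H|) ∑_{t ∈ G} χ°(t g t⁻¹)`. -/
def inducedChar {G : Type} [Group G] (H : Subgroup G) (χ : H → ℂ) : G → ℂ :=
  fun g => (Nat.card H : ℂ)⁻¹ *
    ∑ᶠ t : G, if h : t * g * t⁻¹ ∈ H then χ ⟨t * g * t⁻¹, h⟩ else 0

/-- Standard inner product of class functions on a finite group. -/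
def innerChar (G : Type) [Group G] (f g : G → ℂ) : ℂ :=
  (Nat.card G : ℂ)⁻¹ * ∑ᶠ x : G, f x * (starRingEnd ℂ) (g x)

/-!
The irreducible characters are orthonormal and span the class functions: if a class function `r`
is orthogonal to all of them, then `∑ x, conj (r x) • ρ x` is a scalar of trace zero on every
irreducible `ρ` (Schur), hence zero on every representation (Maschke), and evaluating it on the
regular representation gives `r = 0`. Expanding `χ^G` in irreducible characters,
`χ^G(g) = 0 ≠ χ^G(1)` produces a constituent `φ'` with `φ'(g) ≠ φ'(1)`. By Frobenius reciprocity
the representation of `χ` embeds into the restriction of that of `φ'` to `H`. If `φ'(h) = φ'(1)`,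
then `h` acts trivially on `φ'`, since its eigenvalues are roots of unity, hence on `χ`, which
gives `χ(h) = χ(1)`.
-/

open Module LinearMap CategoryTheory

namespace Module.End

variable {K V : Type*} [Field K] [AddCommGroup V] [Module K V] {f : End K V}

theorem pow_apply_of_mem_eigenspace {μ : K} {v : V} (hv : v ∈ f.eigenspace μ) (k : ℕ) :
    (f ^ k) v = μ ^ k • v := by
  induction k <;> simp [*, pow_succ f, mem_eigenspace_iff.1 hv, smul_smul, pow_succ' μ]

theorem HasEigenvalue.pow_eq_one {n : ℕ} {μ : K} (hμ : f.HasEigenvalue μ) (hf : f ^ n = 1) :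
    μ ^ n = 1 := by
  obtain ⟨v, hv⟩ := hμ.exists_hasEigenvector
  have := hv.pow_apply n
  rw [hf, one_apply] at this
  exact (smul_left_injective K hv.2).eq_iff.1 (by rw [one_smul]; exact this.symm)

theorem isSemisimple_of_pow_eq_one {n : ℕ} (hn : (n : K) ≠ 0) (hf : f ^ n = 1) :
    f.IsSemisimple := by
  refine isSemisimple_of_squarefree_aeval_eq_zero (p := Polynomial.X ^ n - 1) ?_ (by simp [hf])
  simpa using (Polynomial.separable_X_pow_sub_C (1 : K) hn one_ne_zero).squarefree

variable [IsAlgClosed K] [FiniteDimensional K V]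

theorem IsSemisimple.trace_pow_eq_sum (hf : f.IsSemisimple) (k : ℕ) :
    trace K V (f ^ k) =
      ∑ μ ∈ f.finite_hasEigenvalue.toFinset, (finrank K (f.eigenspace μ) : K) * μ ^ k := by
  have hint := DirectSum.isInternal_submodule_of_iSupIndep_of_iSup_eq_top
    f.eigenspaces_iSupIndep hf.iSup_eigenspace_eq_top
  have hmaps (μ : K) : Set.MapsTo (f ^ k) (f.eigenspace μ) (f.eigenspace μ) := fun v hv => by
    rw [SetLike.mem_coe, pow_apply_of_mem_eigenspace hv]
    exact Submodule.smul_mem _ _ hv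
  rw [trace_eq_sum_trace_restrict' hint f.finite_hasEigenvalue hmaps]
  refine Finset.sum_congr rfl fun μ _ => ?_
  have : (f ^ k).restrict (hmaps μ) = μ ^ k • LinearMap.id := by
    ext ⟨v, hv⟩
    exact pow_apply_of_mem_eigenspace hv k
  rw [this, map_smul, trace_id, smul_eq_mul, mul_comm]

theorem IsSemisimple.eq_one_of_forall_hasEigenvalue (hf : f.IsSemisimple)
    (h : ∀ μ, f.HasEigenvalue μ → μ = 1) : f = 1 := by
  suffices f.eigenspace 1 = ⊤ by
    ext v
    simpa using mem_eigenspace_iff.1 (this ▸ Submodule.mem_top : v ∈ f.eigenspace 1)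
  rw [← hf.iSup_eigenspace_eq_top]
  refine le_antisymm (le_iSup _ 1) (iSup_le fun μ => ?_)
  by_cases hμ : f.HasEigenvalue μ
  · rw [h μ hμ]
  · simp [not_not.mp (hasEigenvalue_iff.not.mp hμ)]

end Module.End

namespace FDRep

variable {G : Type} [Group G] (V : FDRep ℂ G) (g : G)

theorem ρ_pow_orderOf : V.ρ g ^ orderOf g = 1 := by
  rw [← map_pow, pow_orderOf_eq_one, map_one]

theorem character_eq_trace_pow_one : V.character g = trace ℂ V (V.ρ g ^ 1) := by
  rw [pow_one]; rfl

variable [Finite G]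

theorem isSemisimple_ρ : Module.End.IsSemisimple (V.ρ g) :=
  Module.End.isSemisimple_of_pow_eq_one (by exact_mod_cast (orderOf_pos g).ne') (V.ρ_pow_orderOf g)

theorem char_inv : V.character g⁻¹ = starRingEnd ℂ (V.character g) := by
  set n := orderOf g
  have hn : n ≠ 0 := (orderOf_pos g).ne'
  have hinv : g⁻¹ = g ^ (n - 1) :=
    (eq_inv_of_mul_eq_one_left (by rw [pow_sub_one_mul hn, pow_orderOf_eq_one])).symm
  have hss := V.isSemisimple_ρ g
  rw [character_eq_trace_pow_one, hinv, map_pow V.ρ, pow_one, character_eq_trace_pow_one,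
    hss.trace_pow_eq_sum, hss.trace_pow_eq_sum, map_sum]
  refine Finset.sum_congr rfl fun μ hμ => ?_
  have hμn : μ ^ n = 1 := ((Set.Finite.mem_toFinset _).1 hμ).pow_eq_one (V.ρ_pow_orderOf g)
  rw [map_mul, map_natCast, pow_one,
    ← Complex.inv_eq_conj (Complex.norm_eq_one_of_pow_eq_one hμn hn),
    ← eq_inv_of_mul_eq_one_left (by rw [pow_sub_one_mul hn, hμn])]

/-- The eigenvalues `μ` of `ρ g` lie on the unit circle, so `Re χ(g) = ∑ dim E_μ · Re μ` reaches
`χ(1) = ∑ dim E_μ` only if every `μ` is `1`. -/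
theorem ρ_eq_one_of_character_eq (h : V.character g = V.character 1) : V.ρ g = 1 := by
  have hss := V.isSemisimple_ρ g
  refine hss.eq_one_of_forall_hasEigenvalue fun μ hμ => ?_
  set s := (Module.End.finite_hasEigenvalue (V.ρ g)).toFinset
  set d : ℂ → ℝ := fun ν => finrank ℂ (Module.End.eigenspace (V.ρ g) ν)
  have hnorm (ν : ℂ) (hν : ν ∈ s) : ‖ν‖ = 1 :=
    Complex.norm_eq_one_of_pow_eq_one
      (((Set.Finite.mem_toFinset _).1 hν).pow_eq_one (V.ρ_pow_orderOf g)) (orderOf_pos g).ne'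
  have hsum : ∑ ν ∈ s, d ν * (1 - ν.re) = 0 := by
    have := congrArg Complex.re h
    rw [character_eq_trace_pow_one, character, map_one, ← pow_zero (V.ρ g),
      hss.trace_pow_eq_sum, hss.trace_pow_eq_sum] at this
    simpa [d, mul_sub, Finset.sum_sub_distrib, sub_eq_zero] using this.symm
  have hμs : μ ∈ s := (Set.Finite.mem_toFinset _).2 hμ
  have hdμ : d μ * (1 - μ.re) = 0 :=
    (Finset.sum_eq_zero_iff_of_nonneg fun ν hν => mul_nonneg (Nat.cast_nonneg _)
      (sub_nonneg.2 (hnorm ν hν ▸ Complex.re_le_norm ν))).1 hsum μ hμs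
  have hdμ_ne : d μ ≠ 0 := by
    simpa [d, Submodule.finrank_eq_zero] using Module.End.hasEigenvalue_iff.1 hμ
  have hre : μ.re = ‖μ‖ := by
    rw [hnorm μ hμs]; linarith [(mul_eq_zero.1 hdμ).resolve_left hdμ_ne]
  rw [Complex.eq_coe_norm_of_nonneg (Complex.re_eq_norm.1 hre), hnorm μ hμs, Complex.ofReal_one]

end FDRep

def IsClassFun {G α : Type*} [Group G] (f : G → α) : Prop :=
  ∀ t x, f (t * x * t⁻¹) = f x

theorem IsIrrChar.isClassFun {G : Type} [Group G] {f : G → ℂ} (hf : IsIrrChar G f) :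
    IsClassFun f := by
  obtain ⟨V, _, hV⟩ := hf
  intro t x
  rw [← hV, ← hV, FDRep.char_conj]

section InnerChar

variable {G : Type} [Group G] [Fintype G]

theorem innerChar_eq_sum (f₁ f₂ : G → ℂ) :
    innerChar G f₁ f₂ = (Nat.card G : ℂ)⁻¹ * ∑ x, f₁ x * starRingEnd ℂ (f₂ x) := by
  rw [innerChar, finsum_eq_sum_of_fintype]

variable (G) in
def innerCharₗ (f : G → ℂ) : (G → ℂ) →ₗ[ℂ] ℂ where
  toFun φ := innerChar G φ f
  map_add' φ ψ := by
    simp only [innerChar_eq_sum, Pi.add_apply, add_mul, Finset.sum_add_distrib, mul_add]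
  map_smul' c φ := by
    simp only [innerChar_eq_sum, Pi.smul_apply, smul_eq_mul, mul_assoc, ← Finset.mul_sum,
      RingHom.id_apply, mul_left_comm]

@[simp]
theorem innerCharₗ_apply (f φ : G → ℂ) : innerCharₗ G f φ = innerChar G φ f :=
  rfl

theorem conj_innerChar (f₁ f₂ : G → ℂ) :
    starRingEnd ℂ (innerChar G f₁ f₂) = innerChar G f₂ f₁ := by
  simp [innerChar_eq_sum, map_sum, mul_comm]

theorem innerChar_character (V W : FDRep ℂ G) :
    innerChar G V.character W.character = finrank ℂ (W ⟶ V) := by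
  let := invertibleOfNonzero (NeZero.ne (Nat.card G : ℂ))
  rw [← FDRep.scalar_product_char_eq_finrank_equivariant, innerChar_eq_sum]
  simp_rw [FDRep.char_inv]

theorem IsIrrChar.innerChar_self {f : G → ℂ} (hf : IsIrrChar G f) : innerChar G f f = 1 := by
  obtain ⟨V, _, hV⟩ := hf
  rw [← funext hV, innerChar_character, finrank_endomorphism_simple_eq_one, Nat.cast_one]

theorem IsIrrChar.innerChar_eq_zero {f f' : G → ℂ} (hf : IsIrrChar G f) (hf' : IsIrrChar G f')
    (hne : f ≠ f') : innerChar G f f' = 0 := by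
  obtain ⟨V, _, hV⟩ := hf
  obtain ⟨W, _, hW⟩ := hf'
  obtain rfl := funext hV
  obtain rfl := funext hW
  rw [innerChar_character, FDRep.finrank_hom_simple_simple,
    if_neg fun ⟨e⟩ => hne (FDRep.char_iso e).symm, Nat.cast_zero]

theorem linearIndependent_isIrrChar :
    LinearIndependent ℂ (Subtype.val : {f : G → ℂ // IsIrrChar G f} → G → ℂ) := by
  rw [linearIndependent_iff']
  intro s c hsum i hi
  have := congrArg (innerCharₗ G i.1) hsum
  rwa [map_sum, map_zero, Finset.sum_eq_single i, map_smul, innerCharₗ_apply,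
    i.2.innerChar_self, smul_eq_mul, mul_one] at this
  · intro j _ hji
    rw [map_smul, innerCharₗ_apply, j.2.innerChar_eq_zero i.2 (Subtype.coe_ne_coe.2 hji),
      smul_zero]
  · exact fun h => absurd hi h

theorem finite_setOf_isIrrChar : {f : G → ℂ | IsIrrChar G f}.Finite :=
  Set.finite_coe_iff.1 linearIndependent_isIrrChar.finite

end InnerChar

namespace Representation

universe u

variable {G : Type} [Group G] [Fintype G] {V : Type u} [AddCommGroup V] [Module ℂ V]
  (ρ : Representation ℂ G V) (a : G → ℂ)

def weightedSum : Module.End ℂ V := ∑ x, a x • ρ x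

theorem weightedSum_apply (v : V) : ρ.weightedSum a v = ∑ x, a x • ρ x v := by
  simp [weightedSum, LinearMap.sum_apply]

variable {a}

theorem weightedSum_comm (ha : IsClassFun a) (g : G) (v : V) :
    ρ.weightedSum a (ρ g v) = ρ g (ρ.weightedSum a v) := by
  rw [weightedSum_apply, weightedSum_apply, map_sum]
  refine (Fintype.sum_equiv (MulAut.conj g).toEquiv _ _ fun x => ?_).symm
  simp only [map_smul, ← End.mul_apply, ← map_mul, MulEquiv.toEquiv_eq_coe, EquivLike.coe_coe,
    MulAut.conj_apply, mul_assoc, inv_mul_cancel, mul_one]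
  rw [← mul_assoc, ha]

theorem trace_weightedSum [FiniteDimensional ℂ V] :
    trace ℂ V (ρ.weightedSum a) = ∑ x, a x * ρ.character x := by
  simp [weightedSum, map_sum, character]

theorem weightedSum_eq_zero_of_isIrreducible [FiniteDimensional ℂ V] [ρ.IsIrreducible]
    (ha : IsClassFun a) (htr : ∑ x, a x * ρ.character x = 0) : ρ.weightedSum a = 0 := by
  obtain ⟨c, hc⟩ := IsIrreducible.algebraMap_intertwiningMap_bijective_of_isAlgClosed.2
    ((ρ.weightedSum a).intertwiningMap_of_isIntertwiningMap ρ ρ (ρ.weightedSum_comm ha))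
  have hscalar : ρ.weightedSum a = c • 1 := congrArg IntertwiningMap.toLinearMap hc.symm
  have : Nontrivial V := by
    by_contra hV
    rw [not_nontrivial_iff_subsingleton] at hV
    exact bot_ne_top (α := Subrepresentation ρ) (Subrepresentation.ext (Subsingleton.elim _ _))
  rw [← trace_weightedSum, hscalar, map_smul, trace_one, smul_eq_mul, mul_eq_zero,
    Nat.cast_eq_zero] at htr
  rw [hscalar, htr.resolve_right finrank_pos.ne', zero_smul]

theorem _root_.Subrepresentation.coe_weightedSum_toRepresentation (p : Subrepresentation ρ)
    (v : p.toSubmodule) : (p.toRepresentation.weightedSum a v : V) = ρ.weightedSum a v := by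
  simp [weightedSum_apply, Subrepresentation.toRepresentation]

theorem weightedSum_eq_zero [FiniteDimensional ℂ V] (ha : IsClassFun a)
    (h : ∀ (W : Type u) [AddCommGroup W] [Module ℂ W] [FiniteDimensional ℂ W]
      (σ : Representation ℂ G W), σ.IsIrreducible → ∑ x, a x * σ.character x = 0) :
    ρ.weightedSum a = 0 := by
  induction hn : finrank ℂ V using Nat.strong_induction_on generalizing V with
  | _ n ih =>
  by_cases hirr : ρ.IsIrreducible
  · exact weightedSum_eq_zero_of_isIrreducible ρ ha (h V ρ hirr)
  cases subsingleton_or_nontrivial V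
  · exact Subsingleton.elim _ _
  have : Nontrivial (Subrepresentation ρ) := by
    obtain ⟨v, hv⟩ := exists_ne (0 : V)
    refine ⟨⊥, ⊤, fun h => hv ((Submodule.mem_bot ℂ).1 ?_)⟩
    exact (h ▸ Submodule.mem_top : v ∈ (⊥ : Subrepresentation ρ).toSubmodule)
  obtain ⟨p, hp_bot, hp_top⟩ : ∃ p : Subrepresentation ρ, p ≠ ⊥ ∧ p ≠ ⊤ := by
    by_contra! hp
    exact hirr ⟨fun p => or_iff_not_imp_left.2 (hp p)⟩
  obtain ⟨q, hpq⟩ := exists_isCompl p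
  -- Maschke: `V = p ⊕ q` with both summands proper, so of smaller dimension
  have hvanish (r : Subrepresentation ρ) (hr : r ≠ ⊤) (v : V) (hv : v ∈ r.toSubmodule) :
      ρ.weightedSum a v = 0 := by
    have hlt : finrank ℂ r.toSubmodule < n :=
      hn ▸ Submodule.finrank_lt fun h => hr (Subrepresentation.toSubmodule_injective h)
    rw [← Subrepresentation.coe_weightedSum_toRepresentation ρ r ⟨v, hv⟩,
      ih _ hlt r.toRepresentation rfl, LinearMap.zero_apply, ZeroMemClass.coe_zero]
  have hq_top : q ≠ ⊤ := fun h => hp_bot (by simpa [h] using hpq.inf_eq_bot)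
  ext v
  have hv : v ∈ p.toSubmodule ⊔ q.toSubmodule := by
    rw [← Subrepresentation.toSubmodule_sup, hpq.sup_eq_top]
    exact Submodule.mem_top
  obtain ⟨x, hx, y, hy, rfl⟩ := Submodule.mem_sup.1 hv
  rw [map_add, hvanish p hp_top x hx, hvanish q hq_top y hy, add_zero, LinearMap.zero_apply]

end Representation

theorem FDRep.simple_of_isIrreducible {G V : Type} [Group G] [Fintype G] [AddCommGroup V]
    [Module ℂ V] [FiniteDimensional ℂ V] (ρ : Representation ℂ G V) [ρ.IsIrreducible] :
    Simple (FDRep.of ρ) := by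
  let := invertibleOfNonzero (NeZero.ne (Nat.card G : ℂ))
  have := ρ.char_orthonormal ρ
  rw [if_pos ⟨Representation.Equiv.refl ρ⟩, inv_mul_eq_one₀ (NeZero.ne _)] at this
  rw [FDRep.simple_iff_char_is_norm_one]
  exact this.symm

section Completeness

variable {G : Type} [Group G] [Fintype G]

theorem Representation.isIrrChar_character {V : Type} [AddCommGroup V] [Module ℂ V]
    [FiniteDimensional ℂ V] (ρ : Representation ℂ G V) [ρ.IsIrreducible] :
    IsIrrChar G ρ.character :=
  ⟨FDRep.of ρ, FDRep.simple_of_isIrreducible ρ, fun _ => rfl⟩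

theorem IsClassFun.eq_zero_of_forall_innerChar_eq_zero {r : G → ℂ} (hr : IsClassFun r)
    (h : ∀ f, IsIrrChar G f → innerChar G r f = 0) : r = 0 := by
  have hconj : IsClassFun (starRingEnd ℂ ∘ r) := fun t x => by simp [hr t x]
  have hreg := (Representation.ofMulAction ℂ G G).weightedSum_eq_zero hconj
    fun W _ _ _ σ hσ => by
      have := conj_innerChar r σ.character ▸ congrArg (starRingEnd ℂ) (h _ σ.isIrrChar_character)
      rw [map_zero, innerChar_eq_sum, mul_eq_zero, inv_eq_zero, Nat.cast_eq_zero] at this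
      simpa [mul_comm] using this.resolve_left Nat.card_pos.ne'
  ext y
  have := congrArg (fun T => (T (MonoidAlgebra.single 1 1)).coeff y) hreg
  simp only [Representation.weightedSum_apply, Function.comp_apply,
    Representation.ofMulAction_single, smul_eq_mul, mul_one, MonoidAlgebra.smul_single,
    MonoidAlgebra.coeff_sum, MonoidAlgebra.coeff_single, Finsupp.coe_finsetSum, Finset.sum_apply,
    LinearMap.zero_apply, MonoidAlgebra.coeff_zero, Finsupp.coe_zero, Pi.zero_apply] at this
  simpa [Finsupp.single_apply] using this

theorem IsClassFun.eq_sum_innerChar_smul {F : G → ℂ} (hF : IsClassFun F) :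
    F = ∑ f ∈ finite_setOf_isIrrChar.toFinset, innerChar G F f • f := by
  rw [← sub_eq_zero]
  refine IsClassFun.eq_zero_of_forall_innerChar_eq_zero (fun t x => ?_) fun f₀ hf₀ => ?_
  · simp only [Pi.sub_apply, Finset.sum_apply, Pi.smul_apply, hF t x]
    congr 1
    exact Finset.sum_congr rfl fun f hf => by
      rw [((Set.Finite.mem_toFinset _).1 hf).isClassFun t x]
  · rw [← innerCharₗ_apply, map_sub, map_sum, Finset.sum_eq_single f₀]
    · simp [hf₀.innerChar_self]
    · intro f hf hne
      simp [((Set.Finite.mem_toFinset _).1 hf).innerChar_eq_zero hf₀ hne]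
    · exact fun h => absurd (finite_setOf_isIrrChar.mem_toFinset.2 hf₀) h

theorem IsClassFun.exists_isIrrChar_innerChar_ne_zero_apply_ne {F : G → ℂ} (hF : IsClassFun F)
    {x y : G} (hxy : F x ≠ F y) :
    ∃ φ, IsIrrChar G φ ∧ innerChar G F φ ≠ 0 ∧ φ x ≠ φ y := by
  by_contra! h
  refine hxy ?_
  rw [hF.eq_sum_innerChar_smul]
  simp only [Finset.sum_apply, Pi.smul_apply, smul_eq_mul]
  refine Finset.sum_congr rfl fun φ hφ => ?_
  by_cases hc : innerChar G F φ = 0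
  · rw [hc, zero_mul, zero_mul]
  · rw [h φ (finite_setOf_isIrrChar.mem_toFinset.1 hφ) hc]

end Completeness

section Induction

variable {G : Type} [Group G] [Fintype G] (H : Subgroup G)

theorem Subgroup.sum_dite_mem {M : Type*} [AddCommMonoid M] (F : H → M) :
    ∑ y : G, (if h : y ∈ H then F ⟨y, h⟩ else 0) = ∑ h : H, F h := by
  rw [← Fintype.sum_subtype_add_sum_subtype (· ∈ H),
    Fintype.sum_eq_zero (fun i : {x // x ∉ H} => _) fun i => dif_neg i.2, add_zero]
  exact Fintype.sum_congr _ _ fun i => dif_pos i.2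

variable (χ : H → ℂ)

theorem inducedChar_eq_sum (g : G) : inducedChar H χ g =
    (Nat.card H : ℂ)⁻¹ * ∑ t, if h : t * g * t⁻¹ ∈ H then χ ⟨_, h⟩ else 0 := by
  rw [inducedChar, finsum_eq_sum_of_fintype]

theorem isClassFun_inducedChar : IsClassFun (inducedChar H χ) := by
  intro t x
  simp only [inducedChar_eq_sum]
  congr 1
  exact Fintype.sum_equiv (Equiv.mulRight t) _ _ fun s => by simp [mul_assoc]

theorem inducedChar_one : inducedChar H χ 1 = (Nat.card H : ℂ)⁻¹ * Nat.card G * χ 1 := by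
  have (t : G) : (if h : t * 1 * t⁻¹ ∈ H then χ ⟨_, h⟩ else 0) = χ 1 := by
    simp only [mul_one, mul_inv_cancel, dif_pos H.one_mem]; rfl
  rw [inducedChar_eq_sum, Finset.sum_congr rfl fun t _ => this t, Finset.sum_const,
    Finset.card_univ, ← Nat.card_eq_fintype_card, nsmul_eq_mul, mul_assoc]

theorem innerChar_inducedChar {φ : G → ℂ} (hφ : IsClassFun φ) :
    innerChar G φ (inducedChar H χ) = innerChar H (fun h => φ h) χ := by
  set ψ : G → ℂ := fun y => φ y * starRingEnd ℂ (if h : y ∈ H then χ ⟨y, h⟩ else 0)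
  have hψ (t : G) : ∑ x, ψ (t * x * t⁻¹) = ∑ h : H, φ h * starRingEnd ℂ (χ h) := by
    rw [Fintype.sum_equiv (MulAut.conj t).toEquiv (fun x => ψ (t * x * t⁻¹)) ψ fun _ => rfl]
    simp only [ψ, apply_dite, map_zero, mul_zero]
    exact H.sum_dite_mem (fun h : H => φ h * starRingEnd ℂ (χ h))
  calc innerChar G φ (inducedChar H χ)
      = (Nat.card G : ℂ)⁻¹ * ((Nat.card H : ℂ)⁻¹ * ∑ t, ∑ x, ψ (t * x * t⁻¹)) := by
        rw [innerChar_eq_sum]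
        congr 1
        rw [Finset.sum_comm, Finset.mul_sum]
        refine Finset.sum_congr rfl fun x _ => ?_
        simp only [ψ, hφ _ _, inducedChar_eq_sum, map_mul, map_inv₀, map_natCast, map_sum,
          Finset.mul_sum]
        refine Finset.sum_congr rfl fun t _ => by ring
    _ = innerChar H (fun h => φ h) χ := by
        have : (Nat.card G : ℂ) ≠ 0 := NeZero.ne _
        simp only [hψ, Finset.sum_const, Finset.card_univ, nsmul_eq_mul, innerChar_eq_sum,
          ← Nat.card_eq_fintype_card]
        field_simp

end Induction

namespace FDRep

variable {G : Type} [Group G]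

def res (H : Subgroup G) (V : FDRep ℂ G) : FDRep ℂ H :=
  FDRep.of (V.ρ.comp H.subtype)

theorem hom_apply_ρ {W V : FDRep ℂ G} (f : W ⟶ V) (g : G) (w : W) :
    f.hom (W.ρ g w) = V.ρ g (f.hom w) :=
  congrFun (congrArg (fun (φ : W.V ⟶ V.V) => (φ : W → V)) (f.comm g)) w

theorem finrank_ne_zero_of_simple (W : FDRep ℂ G) [Simple W] : finrank ℂ W ≠ 0 := by
  intro h
  have := Module.finrank_zero_iff.1 h
  exact id_nonzero W (by ext w; exact Subsingleton.elim _ _)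

theorem ρ_eq_one_of_hom_ne_zero {W V : FDRep ℂ G} [Simple W] {f : W ⟶ V} (hf : f ≠ 0) {g : G}
    (hg : V.ρ g = 1) : W.ρ g = 1 := by
  have : Mono f := mono_of_nonzero_from_simple hf
  have hinj : Function.Injective f.hom :=
    (Rep.mono_iff_injective _).1 ((forget₂ (FDRep ℂ G) (Rep ℂ G)).map_mono f)
  ext w
  apply hinj
  rw [hom_apply_ρ, hg]
  rfl

theorem character_eq_of_innerChar_res_ne_zero [Fintype G] {H : Subgroup G} {V : FDRep ℂ G}
    {W : FDRep ℂ H} [Simple W] (hVW : innerChar H (fun h : H => V.character h) W.character ≠ 0)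
    {h : H} (hh : V.character h = V.character 1) : W.character h = W.character 1 := by
  change innerChar H (V.res H).character W.character ≠ 0 at hVW
  rw [innerChar_character, Nat.cast_ne_zero, ← Nat.pos_iff_ne_zero, Module.finrank_pos_iff] at hVW
  obtain ⟨f, hf⟩ := exists_ne (0 : W ⟶ V.res H)
  have hWh := ρ_eq_one_of_hom_ne_zero hf (V.ρ_eq_one_of_character_eq h hh)
  rw [character, character, hWh, map_one W.ρ]

end FDRep

/-- If `H'` avoids `Ker χ` and `χ^G` vanishes at some `g ∈ G`, then there is an
irreducible constituent `φ'` of `χ^G` whose kernel avoids `{g} ∪ H'`. -/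
theorem exists_irr_constituent_avoiding
    {G : Type} [Group G] [Fintype G] (H : Subgroup G)
    (χ : H → ℂ) (hχ : IsIrrChar H χ)
    (H' : Set H) (hH' : ∀ h ∈ H', χ h ≠ χ 1)
    (g : G) (hg : inducedChar H χ g = 0) :
    ∃ φ' : G → ℂ, IsIrrChar G φ' ∧ innerChar G φ' (inducedChar H χ) ≠ 0 ∧
      φ' g ≠ φ' 1 ∧ ∀ h ∈ H', φ' (h : G) ≠ φ' 1 := by
  obtain ⟨W, _, hW⟩ := hχ
  obtain rfl := funext hW
  have hF1 : inducedChar H W.character 1 ≠ 0 := by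
    rw [inducedChar_one, FDRep.char_one]
    simp [W.finrank_ne_zero_of_simple]
  obtain ⟨φ, hφ, hφF, hφg⟩ :=
    (isClassFun_inducedChar H W.character).exists_isIrrChar_innerChar_ne_zero_apply_ne
      (x := g) (y := 1) (by rw [hg]; exact hF1.symm)
  have hc : innerChar G φ (inducedChar H W.character) ≠ 0 := by
    rwa [← conj_innerChar, map_ne_zero]
  refine ⟨φ, hφ, hc, hφg, fun h hh hker => hH' h hh ?_⟩
  rw [innerChar_inducedChar H _ hφ.isClassFun] at hc
  obtain ⟨V, _, hV⟩ := hφ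
  obtain rfl := funext hV
  exact FDRep.character_eq_of_innerChar_res_ne_zero hc hker
end
end

section
/- Let G be a finite abelian group that can be generated by three elements, one of which has order 2, and suppose G contains a subgroup isomorphic to ℤ/2 × ℤ/2. Then there exist positive integers m, n such that G is isomorphic to ℤ/2m × ℤ/2mn or to ℤ/2 × ℤ/2m × ℤ/2mn. -/
/-!
Write the group additively. By the primary decomposition it is `∏ i, ℤ/pᵢ^eᵢ`; placing, for
every prime, its factors in increasing order into the last slots of `Fin k` and multiplying
slotwise (Chinese remainder theorem) gives invariant factors `1 < d₀ ∣ d₁ ∣ ⋯ ∣ d_{k-1}`.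

Reduction modulo a prime `p ∣ d₀` maps the group onto `(ℤ/p)^k`, so three generators force
`k ≤ 3`. A factor `ℤ/d` with `d` odd has no `2`-torsion and a Klein four group does not embed in
a cyclic group, so two of the `dⱼ` are even and `k ≥ 2`. When `k = 3`, the generator `s` of
order `2` vanishes modulo an odd prime dividing `d₀`, and modulo `2` if `4 ∣ d₀`; either way
`(ℤ/p)^3` would be generated by two elements, so `d₀ = 2`.
-/

open Finset Function

namespace Finset

variable {α : Type*} [LinearOrder α] (s : Finset α)

lemma card_filter_lt_strictMonoOn : StrictMonoOn (fun x => #{z ∈ s | z < x}) s := by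
  intro x hx y _ hxy
  refine card_lt_card ((ssubset_iff_of_subset ?_).2 ⟨x, ?_, ?_⟩)
  · intro z
    simp only [mem_filter]
    exact fun ⟨hz, hzx⟩ => ⟨hz, hzx.trans hxy⟩
  · simp [mem_coe.1 hx, hxy]
  · simp

lemma card_filter_lt_lt_card {x : α} (hx : x ∈ s) : #{z ∈ s | z < x} < #s :=
  card_lt_card (filter_ssubset.2 ⟨x, hx, lt_irrefl x⟩)

lemma exists_card_filter_lt_eq {c : ℕ} (hc : c < #s) : ∃ x ∈ s, #{z ∈ s | z < x} = c := by
  obtain ⟨x, hx, hxc⟩ := surj_on_of_inj_on_of_card_le (t := range #s)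
    (fun x _ => #{z ∈ s | z < x}) (fun x hx => mem_range.2 (card_filter_lt_lt_card s hx))
    (fun x y hx hy => (card_filter_lt_strictMonoOn s).injOn hx hy) (by simp) c (mem_range.2 hc)
  exact ⟨x, hx, hxc.symm⟩

end Finset

theorem exists_fin_surjective_fiberwise_strictMono {ι β : Type*} [Fintype ι] [LinearOrder ι]
    [DecidableEq β] (p : ι → β) :
    ∃ (k : ℕ) (r : ι → Fin k), Surjective r ∧
      (∀ i i', p i = p i' → i < i' → r i < r i') ∧
      ∀ i j, r i ≤ j → ∃ i', p i' = p i ∧ r i' = j := by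
  set F : ι → Finset ι := fun i => univ.filter fun i' => p i' = p i
  have hF : ∀ {i i'}, p i = p i' → F i = F i' := fun h => by simp only [F, h]
  have hmem : ∀ {i i'}, i' ∈ F i ↔ p i' = p i := by simp [F]
  set k := univ.sup fun i => #(F i)
  have hFk : ∀ i, #(F i) ≤ k := fun i => le_sup (f := fun i => #(F i)) (mem_univ i)
  have hlt : ∀ i, #{i' ∈ F i | i' < i} < #(F i) := fun i =>
    card_filter_lt_lt_card _ (hmem.2 rfl)
  -- each fiber occupies the last `#(F i)` slots, in increasing order
  refine ⟨k, fun i => ⟨k - #(F i) + #{i' ∈ F i | i' < i}, by have := hlt i; have := hFk i; omega⟩,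
    ?_, ?_, ?_⟩
  · intro j
    have : Nonempty ι := let ⟨i, _, _⟩ := Finset.lt_sup_iff.1 j.2; ⟨i⟩
    obtain ⟨i₀, -, hi₀⟩ := exists_mem_eq_sup univ univ_nonempty fun i => #(F i)
    have hi₀ : k = #(F i₀) := hi₀
    obtain ⟨i, hi, hic⟩ := exists_card_filter_lt_eq (F i₀) (c := j) (hi₀ ▸ j.2)
    refine ⟨i, Fin.ext ?_⟩
    simp only [hF (hmem.1 hi), hic, ← hi₀]
    omega
  · intro i i' hii' hlt'
    have : #{z ∈ F i | z < i} < #{z ∈ F i | z < i'} :=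
      card_filter_lt_strictMonoOn (F i) (hmem.2 rfl) (hmem.2 hii'.symm) hlt'
    show k - #(F i) + #{i'' ∈ F i | i'' < i} < k - #(F i') + #{i'' ∈ F i' | i'' < i'}
    rw [← hF hii']
    have := hFk i
    omega
  · intro i j hij
    have hij : k - #(F i) + #{i' ∈ F i | i' < i} ≤ j := hij
    obtain ⟨i', hi', hic⟩ := exists_card_filter_lt_eq (F i) (c := j - (k - #(F i)))
      (by have := hFk i; have := j.2; omega)
    refine ⟨i', hmem.1 hi', Fin.ext ?_⟩
    simp only [hF (hmem.1 hi'), hic]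
    have := hFk i
    omega

noncomputable def piZModAddEquivPiZModProd {ι κ : Type*} [Fintype ι] [DecidableEq κ]
    (n : ι → ℕ) (r : ι → κ) (hn : ∀ i i', r i = r i' → i ≠ i' → (n i).Coprime (n i')) :
    (∀ i, ZMod (n i)) ≃+ ∀ j, ZMod (∏ i : {i // r i = j}, n i) :=
  ((LinearEquiv.piCongrLeft ℤ (fun i => ZMod (n i)) (Equiv.sigmaFiberEquiv r)).symm.trans
    (LinearEquiv.piCurry ℤ fun j (i : {i // r i = j}) => ZMod (n i))).toAddEquiv.trans <|
  AddEquiv.piCongrRight fun j => (ZMod.prodEquivPi (fun i : {i // r i = j} => n i) fun i i' h =>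
    hn i i' (i.2.trans i'.2.symm) (Subtype.coe_injective.ne h)).symm.toAddEquiv

theorem AddCommGroup.exists_addEquiv_pi_zmod_prime_pow (A : Type*) [AddCommGroup A] [Finite A] :
    ∃ (ι : Type) (_ : Fintype ι) (p e : ι → ℕ), (∀ i, (p i).Prime) ∧ (∀ i, e i ≠ 0) ∧
      Nonempty (A ≃+ ∀ i, ZMod (p i ^ e i)) := by
  classical
  obtain ⟨ι, _, p, hp, e, ⟨φ⟩⟩ := AddCommGroup.equiv_directSum_zmod_of_finite A
  have : ∀ i : {i // ¬ e i ≠ 0}, Unique (ZMod (p i ^ e i)) := fun i => by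
    rw [not_not.1 i.2, pow_zero]
    infer_instance
  exact ⟨{i // e i ≠ 0}, inferInstance, fun i => p i, fun i => e i, fun i => hp i, fun i => i.2,
    ⟨φ.trans <| (DirectSum.addEquivProd _).trans <|
      (RingEquiv.piEquivPiSubtypeProd _ fun i => ZMod (p i ^ e i)).toAddEquiv.trans
        AddEquiv.prodUnique⟩⟩

theorem AddCommGroup.exists_addEquiv_pi_zmod_dvd (A : Type*) [AddCommGroup A] [Finite A] :
    ∃ (k : ℕ) (d : Fin k → ℕ), (∀ j, 1 < d j) ∧ (∀ j j', j ≤ j' → d j ∣ d j') ∧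
      Nonempty (A ≃+ ∀ j, ZMod (d j)) := by
  classical
  obtain ⟨ι, _, p, e, hp, he, ⟨φ⟩⟩ := exists_addEquiv_pi_zmod_prime_pow A
  let : LinearOrder ι := LinearOrder.lift' (fun i => toLex (e i, Fintype.equivFin ι i))
    fun i i' h => (Fintype.equivFin ι).injective (congrArg (fun x => (ofLex x).2) h)
  have he_mono : Monotone e := fun i i' h => (Prod.Lex.le_iff.1 h).elim (·.le) (·.1.le)
  obtain ⟨k, r, hr_surj, hr_mono, hr_seg⟩ := exists_fin_surjective_fiberwise_strictMono p
  have hcop : ∀ i i', r i = r i' → i ≠ i' → (p i ^ e i).Coprime (p i' ^ e i') := by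
    refine fun i i' hr hne => Nat.Coprime.pow _ _ ((Nat.coprime_primes (hp i) (hp i')).2 ?_)
    intro hpp
    rcases hne.lt_or_gt with h | h
    · exact (hr_mono i i' hpp h).ne hr
    · exact (hr_mono i' i hpp.symm h).ne hr.symm
  refine ⟨k, fun j => ∏ i : {i // r i = j}, p i ^ e i, fun j => ?_, fun j j' hjj' => ?_,
    ⟨φ.trans (piZModAddEquivPiZModProd _ r hcop)⟩⟩
  · obtain ⟨i, rfl⟩ := hr_surj j
    exact (Nat.one_lt_pow (he i) (hp i).one_lt).trans_le <| Nat.le_of_dvd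
      (prod_pos fun i _ => pow_pos (hp i).pos _)
      (dvd_prod_of_mem _ (mem_univ (⟨i, rfl⟩ : {i' // r i' = r i})))
  · refine Fintype.prod_dvd_of_isRelPrime (fun i i' h => Nat.coprime_iff_isRelPrime.mp <|
      hcop i i' (i.2.trans i'.2.symm) (Subtype.coe_injective.ne h)) fun i => ?_
    obtain ⟨i, rfl⟩ := i
    obtain ⟨i', hpi', rfl⟩ := hr_seg i j' hjj'
    have hii' : i ≤ i' := not_lt.1 fun h => (hr_mono i' i hpi' h).not_ge hjj'
    rw [← hpi']
    exact (pow_dvd_pow _ (he_mono hii')).trans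
      (dvd_prod_of_mem _ (mem_univ (⟨i', rfl⟩ : {i'' // r i'' = r i'})))

theorem ZMod.eq_zero_of_two_nsmul_eq_zero {d : ℕ} (hd : ¬ 2 ∣ d) {z : ZMod d} (hz : 2 • z = 0) :
    z = 0 := by
  have hu : IsUnit (2 : ZMod d) := by
    exact_mod_cast (ZMod.isUnit_iff_coprime 2 d).2 ((Nat.prime_two.coprime_iff_not_dvd).2 hd)
  rwa [nsmul_eq_mul, Nat.cast_ofNat, hu.mul_right_eq_zero] at hz

theorem ZMod.castHom_eq_zero_of_two_nsmul_eq_zero {d p : ℕ} (hpd : p ∣ d)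
    (hp : p.Coprime 2 ∨ p * 2 ∣ d) {z : ZMod d} (hz : 2 • z = 0) :
    ZMod.castHom hpd (ZMod p) z = 0 := by
  obtain ⟨m, rfl⟩ := ZMod.intCast_surjective z
  have hdm : (d : ℤ) ∣ m * 2 := by
    rw [← ZMod.intCast_zmod_eq_zero_iff_dvd, Int.cast_mul, ← hz, nsmul_eq_mul, mul_comm]
    norm_num
  rw [map_intCast, ZMod.intCast_zmod_eq_zero_iff_dvd]
  rcases hp with hp | hp
  · exact (Nat.isCoprime_iff_coprime.2 hp).dvd_of_dvd_mul_right
      ((Int.natCast_dvd_natCast.2 hpd).trans hdm)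
  · exact (mul_dvd_mul_iff_right two_ne_zero).1
      ((Int.natCast_dvd_natCast.2 hp).trans (by simpa using hdm))

theorem not_injective_of_isAddCyclic {C : Type*} [AddGroup C] [IsAddCyclic C]
    (f : ZMod 2 × ZMod 2 →+ C) : ¬ Injective f := fun hf => by
  have := (AddGroup.isAddCyclic_prod_iff.1 (isAddCyclic_of_injective f hf)).2.2
  simp at this

theorem exists_ne_two_dvd_of_injective {ι : Type*} {d : ι → ℕ}
    {f : ZMod 2 × ZMod 2 →+ ∀ j, ZMod (d j)} (hf : Injective f) :
    ∃ j₁ j₂, j₁ ≠ j₂ ∧ 2 ∣ d j₁ ∧ 2 ∣ d j₂ := by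
  have hodd : ∀ x j, ¬ 2 ∣ d j → f x j = 0 := fun x j hj =>
    ZMod.eq_zero_of_two_nsmul_eq_zero hj <| by
      rw [← Pi.smul_apply, ← map_nsmul, (by decide : ∀ y : ZMod 2 × ZMod 2, 2 • y = 0), map_zero]
      rfl
  by_contra! h
  by_cases h₀ : ∃ j₀, 2 ∣ d j₀
  · obtain ⟨j₀, hj₀⟩ := h₀
    refine not_injective_of_isAddCyclic ((Pi.evalAddMonoidHom _ j₀).comp f) ?_
    refine (injective_iff_map_eq_zero _).2 fun x hx => (injective_iff_map_eq_zero f).1 hf x ?_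
    funext j
    by_cases hj : j = j₀
    · exact hj ▸ hx
    · exact hodd x j (h j₀ j (Ne.symm hj) hj₀)
  · rw [not_exists] at h₀
    have h10 : f (1, 0) = f 0 := funext fun j => (hodd _ j (h₀ j)).trans (by simp)
    exact absurd (hf h10) (by decide)

theorem AddSubgroup.closure_image_eq_top {A B : Type*} [AddGroup A] [AddGroup B] {f : A →+ B}
    (hf : Surjective f) {S : Set A} (hS : closure S = ⊤) : closure (f '' S) = ⊤ := by
  rw [← AddMonoidHom.map_closure, hS, AddSubgroup.map_top_of_surjective f hf]

theorem le_card_of_closure_eq_top {k p : ℕ} [Fact p.Prime] {S : Finset (Fin k → ZMod p)}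
    (hS : AddSubgroup.closure (S : Set (Fin k → ZMod p)) = ⊤) : k ≤ #S := by
  have hspan : Submodule.span (ZMod p) (S : Set (Fin k → ZMod p)) = ⊤ := top_le_iff.1 fun v _ =>
    (AddSubgroup.closure_le (Submodule.span (ZMod p) _).toAddSubgroup).2 Submodule.subset_span
      (hS ▸ AddSubgroup.mem_top v)
  have := finrank_span_finset_le_card (R := ZMod p) S
  rwa [Set.finrank, hspan, finrank_top, Module.finrank_fin_fun] at this

def ZMod.piCastHom {ι : Type*} {d : ι → ℕ} {p : ℕ} (h : ∀ j, p ∣ d j) :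
    (∀ j, ZMod (d j)) →+* (ι → ZMod p) :=
  RingHom.pi fun j => (ZMod.castHom (h j) _).comp (Pi.evalRingHom _ j)

theorem ZMod.piCastHom_surjective {ι : Type*} {d : ι → ℕ} {p : ℕ} (h : ∀ j, p ∣ d j) :
    Surjective (ZMod.piCastHom h) :=
  Surjective.piMap fun j => ZMod.castHom_surjective (h j)

section Reduction

variable {k p : ℕ} [Fact p.Prime] {d : Fin k → ℕ} {a b s : ∀ j, ZMod (d j)}

theorem le_three_of_closure_eq_top (hpd : ∀ j, p ∣ d j)
    (hgen : AddSubgroup.closure {a, b, s} = ⊤) : k ≤ 3 := by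
  classical
  set ψ := (ZMod.piCastHom hpd).toAddMonoidHom
  refine (le_card_of_closure_eq_top (S := {ψ a, ψ b, ψ s}) ?_).trans card_le_three
  simpa [Set.image_insert_eq] using
    AddSubgroup.closure_image_eq_top (f := ψ) (ZMod.piCastHom_surjective hpd) hgen

theorem le_two_of_closure_eq_top (hpd : ∀ j, p ∣ d j) (hgen : AddSubgroup.closure {a, b, s} = ⊤)
    (hs : ZMod.piCastHom hpd s = 0) : k ≤ 2 := by
  classical
  set ψ := (ZMod.piCastHom hpd).toAddMonoidHom
  refine (le_card_of_closure_eq_top (S := {ψ a, ψ b}) ?_).trans card_le_two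
  have := AddSubgroup.closure_image_eq_top (f := ψ) (ZMod.piCastHom_surjective hpd) hgen
  rw [Set.image_insert_eq, Set.image_insert_eq, Set.image_singleton, show ψ s = 0 from hs,
    Set.pair_comm, Set.insert_comm, AddSubgroup.closure_insert_zero] at this
  simpa only [coe_insert, coe_singleton] using this

end Reduction

theorem eq_two_of_closure_eq_top {d : Fin 3 → ℕ} (hd : 1 < d 0) (hdvd : ∀ j, d 0 ∣ d j)
    {a b s : ∀ j, ZMod (d j)} (hgen : AddSubgroup.closure {a, b, s} = ⊤) (hs : 2 • s = 0) :
    d 0 = 2 := by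
  have hs_vanish : ∀ p, [Fact p.Prime] → p ∣ d 0 → p.Coprime 2 ∨ p * 2 ∣ d 0 → False :=
    fun p _ hpd hp => absurd (le_two_of_closure_eq_top (fun j => hpd.trans (hdvd j)) hgen
      (funext fun j => ZMod.castHom_eq_zero_of_two_nsmul_eq_zero (hpd.trans (hdvd j))
        (hp.imp_right (·.trans (hdvd j))) (congrFun hs j))) (by decide)
  rcases (d 0).eq_two_pow_or_exists_odd_prime_and_dvd with ⟨_ | _ | e, he⟩ | ⟨p, hp, hpd, hodd⟩
  · simp [he] at hd
  · simpa using he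
  · have := Fact.mk Nat.prime_two
    exact (hs_vanish 2 (he ▸ dvd_pow_self 2 (by omega))
      (.inr (he ▸ pow_dvd_pow 2 (by omega : 2 ≤ e + 2)))).elim
  · have := Fact.mk hp
    exact (hs_vanish p hpd (.inl (Nat.coprime_two_right.2 hodd))).elim

theorem exists_addEquiv_zmod_two_mul_prod {d : Fin 2 → ℕ} (h₀ : 2 ∣ d 0) (h₀₁ : d 0 ∣ d 1)
    (h₁ : d 1 ≠ 0) : ∃ m n : ℕ, 0 < m ∧ 0 < n ∧
      Nonempty ((∀ j, ZMod (d j)) ≃+ ZMod (2 * m) × ZMod (2 * m * n)) := by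
  obtain ⟨m, hm⟩ := h₀
  obtain ⟨n, hn⟩ := h₀₁
  rw [hm] at hn
  refine ⟨m, n, Nat.pos_of_ne_zero ?_, Nat.pos_of_ne_zero ?_,
    ⟨(LinearEquiv.piFinTwo ℤ fun j => ZMod (d j)).toAddEquiv.trans <|
      (ZMod.ringEquivCongr hm).toAddEquiv.prodCongr (ZMod.ringEquivCongr hn).toAddEquiv⟩⟩ <;>
  · rintro rfl
    simp_all

def AddEquiv.piFinSucc {n : ℕ} (X : Fin (n + 1) → Type*) [∀ j, Add (X j)] :
    (∀ j, X j) ≃+ X 0 × ∀ j : Fin n, X j.succ :=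
  AddEquiv.mk' (Fin.consEquiv X).symm fun _ _ => rfl

theorem AddCommGroup.exists_addEquiv_zmod_prod_of_closure_eq_top {A : Type*} [AddCommGroup A]
    [Finite A] {a b s : A} (hgen : AddSubgroup.closure {a, b, s} = ⊤) (hs : 2 • s = 0)
    {f : ZMod 2 × ZMod 2 →+ A} (hf : Injective f) :
    ∃ m n : ℕ, 0 < m ∧ 0 < n ∧
      (Nonempty (A ≃+ ZMod (2 * m) × ZMod (2 * m * n)) ∨
       Nonempty (A ≃+ ZMod 2 × ZMod (2 * m) × ZMod (2 * m * n))) := by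
  obtain ⟨k, d, hd, hdvd, ⟨φ⟩⟩ := exists_addEquiv_pi_zmod_dvd A
  have hgen' : AddSubgroup.closure {φ a, φ b, φ s} = ⊤ := by
    simpa [Set.image_insert_eq] using
      AddSubgroup.closure_image_eq_top (f := φ.toAddMonoidHom) φ.surjective hgen
  have hs' : 2 • φ s = 0 := by rw [← map_nsmul, hs, map_zero]
  obtain ⟨j₁, j₂, hne, h₁, h₂⟩ :=
    exists_ne_two_dvd_of_injective (f := φ.toAddMonoidHom.comp f) (φ.injective.comp hf)
  have hk2 : 2 ≤ k := by
    have := Fin.val_ne_of_ne hne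
    omega
  have hk3 : k ≤ 3 := by
    obtain ⟨p, hp, hpd⟩ := Nat.exists_prime_and_dvd (hd ⟨0, by omega⟩).ne'
    have := Fact.mk hp
    exact le_three_of_closure_eq_top (fun j => hpd.trans (hdvd _ j (Nat.zero_le _))) hgen'
  obtain rfl | rfl : k = 2 ∨ k = 3 := by omega
  · have h₀ : 2 ∣ d 0 := by
      fin_cases j₁ <;> fin_cases j₂ <;> simp_all
    obtain ⟨m, n, hm, hn, ⟨ψ⟩⟩ :=
      exists_addEquiv_zmod_two_mul_prod h₀ (hdvd 0 1 (by decide)) (Nat.ne_zero_of_lt (hd 1))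
    exact ⟨m, n, hm, hn, .inl ⟨φ.trans ψ⟩⟩
  · have h₀ : d 0 = 2 := eq_two_of_closure_eq_top (hd 0) (hdvd 0 · (Fin.zero_le _)) hgen' hs'
    obtain ⟨m, n, hm, hn, ⟨ψ⟩⟩ := exists_addEquiv_zmod_two_mul_prod (d := fun j => d j.succ)
      (by simpa [h₀] using hdvd 0 1 (by decide)) (hdvd 1 2 (by decide)) (Nat.ne_zero_of_lt (hd 2))
    exact ⟨m, n, hm, hn, .inr ⟨φ.trans <| (AddEquiv.piFinSucc _).trans <|
      (ZMod.ringEquivCongr h₀).toAddEquiv.prodCongr ψ⟩⟩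

/-- A finite abelian group generated by three elements, one of order `2`, containing
a Klein four subgroup, is isomorphic to `ℤ/2m × ℤ/2mn` or `ℤ/2 × ℤ/2m × ℤ/2mn`. -/
theorem abelian_three_generators_classification
    {G : Type*} [CommGroup G] [Finite G] (a b s : G) (hs : orderOf s = 2)
    (hgen : Subgroup.closure {a, b, s} = ⊤)
    (H : Subgroup G) (hH : Nonempty (H ≃* Multiplicative (ZMod 2 × ZMod 2))) :
    ∃ m n : ℕ, 0 < m ∧ 0 < n ∧
      (Nonempty (G ≃* Multiplicative (ZMod (2 * m) × ZMod (2 * m * n))) ∨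
       Nonempty (G ≃* Multiplicative (ZMod 2 × ZMod (2 * m) × ZMod (2 * m * n)))) := by
  obtain ⟨e⟩ := hH
  have hgen' : AddSubgroup.closure
      {Additive.ofMul a, Additive.ofMul b, Additive.ofMul s} = ⊤ := by
    have := congrArg Subgroup.toAddSubgroup hgen
    have hpre : Additive.toMul ⁻¹' {a, b, s} =
        {Additive.ofMul a, Additive.ofMul b, Additive.ofMul s} := by
      ext x
      simp [← Additive.toMul.injective.eq_iff]
    rwa [Subgroup.toAddSubgroup_closure, hpre, OrderIso.map_top] at this
  have hs' : 2 • Additive.ofMul s = 0 := by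
    rw [← ofMul_pow, ← hs, pow_orderOf_eq_one]
    rfl
  obtain ⟨m, n, hm, hn, hφ⟩ := AddCommGroup.exists_addEquiv_zmod_prod_of_closure_eq_top
    hgen' hs' (f := (H.subtype.comp e.symm.toMonoidHom).toAdditiveRight)
    (H.subtype_injective.comp e.symm.injective)
  exact ⟨m, n, hm, hn, hφ.imp (Nonempty.map AddEquiv.toMultiplicativeRight)
    (Nonempty.map AddEquiv.toMultiplicativeRight)⟩
end
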